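/- arXiv:2206.03561 — 6 statements merged into one kernel-verified Lean document; each statement's English description precedes it below -/
import Mathlib

section
/- Let l ≥ 1 be an integer, c > 0, and f(x) = c / x^l for nonzero real x. If x, y are nonzero reals with 2x + y ≠ 0, 2x - y ≠ 0, and 4 f(y)^(2/l) - f(x)^(2/l) ≠ 0, and additionally x, y > 0, then f(2x+y) + f(2x-y) = [2 f(x) f(y) * ∑_{k even, 0 ≤ k ≤ l} 2^(l-k) C(l,k) f(x)^(k/l) f(y)^((l-k)/l)] / (4 f(y)^(2/l) - f(x)^(2/l))^l. -/
/-!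
Write `c = α ^ l` with `α = c ^ (1 / l) > 0`, and put `p = α / x`, `q = α / y`. Then `f x = p ^ l`,
`f y = q ^ l`, every real power `f x ^ (k / l)` is `p ^ k`, and `f (2x ± y) = (p q / (2q ± p)) ^ l`.
The even-indexed half of the binomial expansion of `(2q + p) ^ l` is `((2q + p) ^ l + (2q - p) ^ l) / 2`
and `4q² - p² = (2q + p)(2q - p)`, so the right-hand side is `(pq)^l (1 / (2q + p)^l + 1 / (2q - p)^l)`.
-/

open Finset

theorem Real.pow_rpow_natCast_div {p : ℝ} (hp : 0 ≤ p) {l : ℕ} (hl : l ≠ 0) (k : ℕ) :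
    (p ^ l) ^ ((k : ℝ) / l) = p ^ k := by
  rw [← Real.rpow_natCast_mul hp, mul_div_cancel₀ _ (Nat.cast_ne_zero.2 hl), Real.rpow_natCast]

theorem two_mul_sum_even_choose_mul_pow {R : Type*} [CommRing R] (a b : R) (l : ℕ) :
    2 * ∑ k ∈ (range (l + 1)).filter Even, a ^ k * b ^ (l - k) * l.choose k =
      (a + b) ^ l + (-a + b) ^ l := by
  rw [add_pow, add_pow, ← sum_add_distrib, sum_filter, mul_sum]
  refine sum_congr rfl fun k _ => ?_
  rcases Nat.even_or_odd k with hk | hk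
  · rw [if_pos hk, hk.neg_pow]; ring
  · rw [if_neg (Nat.not_even_iff_odd.2 hk), hk.neg_pow]; ring

theorem pow_div_add_pow_div_eq_sum_even {K : Type*} [Field K] (p q : K) (l : ℕ)
    (hplus : 2 * q + p ≠ 0) (hminus : 2 * q - p ≠ 0) :
    (p * q / (2 * q + p)) ^ l + (p * q / (2 * q - p)) ^ l =
      (2 * p ^ l * q ^ l *
        ∑ k ∈ (range (l + 1)).filter Even, (2 ^ (l - k) * l.choose k : K) * p ^ k * q ^ (l - k)) /
      (4 * q ^ 2 - p ^ 2) ^ l := by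
  have hsum : 2 * ∑ k ∈ (range (l + 1)).filter Even,
      (2 ^ (l - k) * l.choose k : K) * p ^ k * q ^ (l - k) = (2 * q + p) ^ l + (2 * q - p) ^ l := by
    rw [show (2 * q + p) ^ l + (2 * q - p) ^ l = (p + 2 * q) ^ l + (-p + 2 * q) ^ l by ring,
      ← two_mul_sum_even_choose_mul_pow]
    congr 1
    refine sum_congr rfl fun k _ => ?_
    rw [mul_pow]; ring
  rw [show 4 * q ^ 2 - p ^ 2 = (2 * q + p) * (2 * q - p) by ring, mul_pow (2 * q + p), div_pow,
    div_pow, div_add_div _ _ (pow_ne_zero _ hplus) (pow_ne_zero _ hminus),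
    div_left_inj' (mul_ne_zero (pow_ne_zero _ hplus) (pow_ne_zero _ hminus))]
  linear_combination -(p ^ l * q ^ l) * hsum

theorem reciprocal_solves_equation_general (l : ℕ) (hl : 1 ≤ l) (c : ℝ) (hc : 0 < c)
    (f : ℝ → ℝ) (hf : ∀ x : ℝ, x ≠ 0 → f x = c / x ^ l)
    (x y : ℝ) (hx' : 0 < x) (hy' : 0 < y)
    (h2 : 2 * x - y ≠ 0) :
    f (2 * x + y) + f (2 * x - y) =
      (2 * f x * f y *
        ∑ k ∈ (Finset.range (l + 1)).filter (fun k => Even k),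
          (2 ^ (l - k) * Nat.choose l k : ℝ) *
            f x ^ ((k : ℝ) / l) * f y ^ (((l - k : ℕ) : ℝ) / l)) /
      (4 * f y ^ ((2 : ℝ) / l) - f x ^ ((2 : ℝ) / l)) ^ l := by
  have hl0 : l ≠ 0 := Nat.one_le_iff_ne_zero.mp hl
  set α := c ^ ((l : ℝ)⁻¹)
  have hα : 0 < α := Real.rpow_pos_of_pos hc _
  have hf' : ∀ z ≠ 0, f z = (α / z) ^ l := fun z hz => by
    rw [hf z hz, div_pow, Real.rpow_inv_natCast_pow hc.le hl0]
  have hp : 0 ≤ α / x := by positivity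
  have hq : 0 ≤ α / y := by positivity
  have hplus : 2 * (α / y) + α / x = α * (2 * x + y) / (x * y) := by field_simp
  have hminus : 2 * (α / y) - α / x = α * (2 * x - y) / (x * y) := by field_simp
  have hminus0 : 2 * (α / y) - α / x ≠ 0 := by
    rw [hminus]; exact div_ne_zero (mul_ne_zero hα.ne' h2) (by positivity)
  have hp2 : ((α / x) ^ l) ^ ((2 : ℝ) / l) = (α / x) ^ 2 := by
    exact_mod_cast Real.pow_rpow_natCast_div hp hl0 2
  have hq2 : ((α / y) ^ l) ^ ((2 : ℝ) / l) = (α / y) ^ 2 := by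
    exact_mod_cast Real.pow_rpow_natCast_div hq hl0 2
  rw [hf' _ (by positivity), hf' _ h2, hf' x hx'.ne', hf' y hy'.ne', hp2, hq2]
  simp only [Real.pow_rpow_natCast_div hp hl0, Real.pow_rpow_natCast_div hq hl0]
  rw [← pow_div_add_pow_div_eq_sum_even _ _ l (by positivity) hminus0, hplus, hminus]
  congr 2 <;> field_simp

theorem reciprocal_solves_equation (l : ℕ) (hl : 1 ≤ l) (c : ℝ) (hc : 0 < c)
    (f : ℝ → ℝ) (hf : ∀ x : ℝ, x ≠ 0 → f x = c / x ^ l)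
    (x y : ℝ) (hx : x ≠ 0) (hy : y ≠ 0) (hx' : 0 < x) (hy' : 0 < y)
    (h1 : 2 * x + y ≠ 0) (h2 : 2 * x - y ≠ 0)
    (h3 : 4 * f y ^ ((2 : ℝ) / l) - f x ^ ((2 : ℝ) / l) ≠ 0) :
    f (2 * x + y) + f (2 * x - y) =
      (2 * f x * f y *
        ∑ k ∈ (Finset.range (l + 1)).filter (fun k => Even k),
          (2 ^ (l - k) * Nat.choose l k : ℝ) *
            f x ^ ((k : ℝ) / l) * f y ^ (((l - k : ℕ) : ℝ) / l)) /
      (4 * f y ^ ((2 : ℝ) / l) - f x ^ ((2 : ℝ) / l)) ^ l :=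
  reciprocal_solves_equation_general l hl c hc f hf x y hx' hy' h2
end

section
/- Let l ≥ 1 be an integer and Q : ℝ* × ℝ* → [0, ∞) with ∑_{s=0}^∞ (1/3^(l s)) Q(x/3^(s+1), x/3^(s+1)) < ∞ for each nonzero x. If f : ℝ* → ℝ satisfies |f(3x) - f(x)/3^l| ≤ Q(x, x) for all nonzero x, then for each nonzero x the sequence m ↦ (1/3^(l m)) f(x/3^m) is a Cauchy sequence in ℝ, hence converges. -/
theorem approx_seq_cauchy (l : ℕ) (hl : 1 ≤ l) (Q : ℝ → ℝ → ℝ)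
    (hQ : ∀ x y : ℝ, 0 ≤ Q x y)
    (hsum : ∀ x : ℝ, x ≠ 0 →
      Summable (fun s : ℕ => (1 / 3 ^ (l * s)) * Q (x / 3 ^ (s + 1)) (x / 3 ^ (s + 1))))
    (f : ℝ → ℝ)
    (hf : ∀ x : ℝ, x ≠ 0 → |f (3 * x) - f x / 3 ^ l| ≤ Q x x) :
    ∀ x : ℝ, x ≠ 0 →
      CauchySeq (fun m : ℕ => (1 / 3 ^ (l * m)) * f (x / 3 ^ m)) := by
  intro x hx
  apply cauchySeq_of_dist_le_of_summable
    (fun s : ℕ => (1 / 3 ^ (l * s)) * Q (x / 3 ^ (s + 1)) (x / 3 ^ (s + 1)))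
    _ (hsum x hx)
  intro n
  have hy : x / 3 ^ (n + 1) ≠ 0 := by positivity
  have h := hf _ hy
  have hxy : 3 * (x / 3 ^ (n + 1)) = x / 3 ^ n := by
    field_simp
    ring
  rw [hxy] at h
  rw [Real.dist_eq]
  have key : (1 / 3 ^ (l * n) : ℝ) * f (x / 3 ^ n) -
      1 / 3 ^ (l * (n + 1)) * f (x / 3 ^ (n + 1)) =
      (1 / 3 ^ (l * n)) * (f (x / 3 ^ n) - f (x / 3 ^ (n + 1)) / 3 ^ l) := by
    rw [mul_add, mul_one, pow_add]
    field_simp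
  rw [key, abs_mul]
  have h3 : (0:ℝ) < 1 / 3 ^ (l * n) := by positivity
  rw [abs_of_pos h3]
  exact mul_le_mul_of_nonneg_left h (le_of_lt h3)
end

section
/- Let l ≥ 1 be an integer and ε > 0. Suppose f : ℝ* → ℝ satisfies |f(3x) - f(x)/3^l| ≤ ε for all nonzero x. Then the limit g(x) = lim_{m→∞} (1/3^(l m)) f(x/3^m) exists for each nonzero x, g satisfies g(3x) = g(x)/3^l, and |f(x) - g(x)| ≤ (3^l/(3^l - 1)) ε for all nonzero x. -/
open Filter Topology

theorem stability_constant_bound (l : ℕ) (hl : 1 ≤ l) (ε : ℝ) (hε : 0 < ε)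
    (f : ℝ → ℝ)
    (hf : ∀ x : ℝ, x ≠ 0 → |f (3 * x) - f x / 3 ^ l| ≤ ε) :
    ∃ g : ℝ → ℝ,
      (∀ x : ℝ, x ≠ 0 →
        Tendsto (fun m : ℕ => (1 / 3 ^ (l * m)) * f (x / 3 ^ m)) atTop (𝓝 (g x))) ∧
      (∀ x : ℝ, x ≠ 0 → g (3 * x) = g x / 3 ^ l) ∧
      (∀ x : ℝ, x ≠ 0 → |f x - g x| ≤ (3 ^ l / (3 ^ l - 1)) * ε) := by
  set a : ℝ → ℕ → ℝ := fun x m => (1 / 3 ^ (l * m)) * f (x / 3 ^ m) with hadef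
  have h3l : (1:ℝ) < 3 ^ l := one_lt_pow₀ (by norm_num) (by omega)
  have h3lpos : (0:ℝ) < 3 ^ l := by positivity
  have hr : (1:ℝ)/3^l < 1 := by rw [div_lt_one h3lpos]; exact h3l
  have hdist : ∀ x : ℝ, x ≠ 0 → ∀ n, dist (a x n) (a x (n+1)) ≤ ε * (1/3^l)^n := by
    intro x hx n
    have h3n : (0:ℝ) < 3 ^ (n+1) := by positivity
    have hy : x / 3 ^ (n+1) ≠ 0 := div_ne_zero hx (ne_of_gt h3n)
    have key := hf (x / 3^(n+1)) hy
    have h3 : (3:ℝ) * (x / 3^(n+1)) = x / 3^n := by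
      rw [pow_succ]; field_simp
    have heq : a x n - a x (n+1) =
        (1/3^(l*n)) * (f (3 * (x/3^(n+1))) - f (x/3^(n+1)) / 3^l) := by
      rw [h3, hadef]
      simp only []
      have hpow : (3:ℝ)^(l*(n+1)) = 3^(l*n) * 3^l := by rw [mul_add, mul_one, pow_add]
      rw [hpow]
      field_simp
    rw [Real.dist_eq, heq, abs_mul]
    have h1 : |1 / (3:ℝ)^(l*n)| = (1/3^l)^n := by
      rw [abs_of_pos (by positivity), div_pow, one_pow, ← pow_mul]
    rw [h1, mul_comm]
    exact mul_le_mul_of_nonneg_right key (by positivity)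
  have hC : ∀ x : ℝ, x ≠ 0 → CauchySeq (a x) := fun x hx =>
    cauchySeq_of_le_geometric _ ε hr (hdist x hx)
  have hex : ∀ x : ℝ, ∃ L, x ≠ 0 → Tendsto (a x) atTop (𝓝 L) := by
    intro x
    by_cases hx : x = 0
    · exact ⟨0, fun h => absurd hx h⟩
    · obtain ⟨L, hL⟩ := cauchySeq_tendsto_of_complete (hC x hx)
      exact ⟨L, fun _ => hL⟩
  choose g hg using hex
  refine ⟨g, fun x hx => hg x hx, ?_, ?_⟩
  · intro x hx
    have h3x : (3:ℝ) * x ≠ 0 := by simp [hx]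
    have t1 : Tendsto (fun n => a (3*x) (n+1)) atTop (𝓝 (g (3*x))) :=
      (hg _ h3x).comp (tendsto_add_atTop_nat 1)
    have heq : ∀ n, a (3*x) (n+1) = (1/3^l) * a x n := by
      intro n
      rw [hadef]
      simp only []
      have h3 : (3:ℝ) * x / 3^(n+1) = x / 3^n := by rw [pow_succ]; field_simp
      have hpow : (3:ℝ)^(l*(n+1)) = 3^(l*n) * 3^l := by rw [mul_add, mul_one, pow_add]
      rw [h3, hpow]
      ring
    have t2 : Tendsto (fun n => a (3*x) (n+1)) atTop (𝓝 ((1/3^l) * g x)) := by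
      simp only [heq]
      exact (hg x hx).const_mul _
    rw [tendsto_nhds_unique t1 t2]
    ring
  · intro x hx
    have hb := dist_le_of_le_geometric_of_tendsto₀ _ ε hr (hdist x hx) (hg x hx)
    have ha0 : a x 0 = f x := by rw [hadef]; simp
    rw [ha0, Real.dist_eq] at hb
    refine hb.trans (le_of_eq ?_)
    have h1 : (3:ℝ)^l - 1 ≠ 0 := by linarith
    field_simp
end

section
/- Let l ≥ 1 be an integer, ε > 0, and α a real number with α + l > 0 (equivalently α ≠ -l with 3^(α+l) > 1). Suppose f : ℝ* → ℝ satisfies |f(3x) - f(x)/3^l| ≤ 2ε |x|^α for all nonzero x (this follows from the two-variable bound |Λ(x,y)| ≤ ε(|x|^α + |y|^α) at y = x). Then there exists g : ℝ* → ℝ with g(3x) = g(x)/3^l for all nonzero x and |f(x) - g(x)| ≤ (2 · 3^l ε / (3^(α+l) - 1)) |x|^α for all nonzero x. -/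
open Filter Topology Real

theorem stability_power_bound (l : ℕ) (hl : 1 ≤ l) (ε : ℝ) (hε : 0 < ε)
    (α : ℝ) (hα : α + l > 0)
    (f : ℝ → ℝ)
    (hf : ∀ x : ℝ, x ≠ 0 → |f (3 * x) - f x / 3 ^ l| ≤ 2 * ε * |x| ^ α) :
    ∃ g : ℝ → ℝ,
      (∀ x : ℝ, x ≠ 0 → g (3 * x) = g x / 3 ^ l) ∧
      (∀ x : ℝ, x ≠ 0 →
        |f x - g x| ≤ (2 * 3 ^ l * ε / ((3 : ℝ) ^ (α + (l : ℝ)) - 1)) * |x| ^ α) := by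
  have h3 : (0:ℝ) < 3 := by norm_num
  set r : ℝ := (3:ℝ) ^ (-(α + (l:ℝ))) with hr_def
  have hr0 : 0 < r := Real.rpow_pos_of_pos h3 _
  have hr1 : r < 1 := by
    rw [hr_def]
    exact Real.rpow_lt_one_of_one_lt_of_neg (by norm_num) (by linarith)
  have hR1 : (1:ℝ) < (3:ℝ) ^ (α + (l:ℝ)) :=
    Real.one_lt_rpow_iff_of_pos h3 |>.mpr (Or.inl ⟨by norm_num, hα⟩)
  set S : ℝ → ℕ → ℝ := fun x m => f (x / 3 ^ m) / 3 ^ (l * m) with hS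
  have hstep : ∀ x : ℝ, x ≠ 0 → ∀ m : ℕ,
      dist (S x m) (S x (m+1)) ≤ (2 * ε * |x| ^ α * (3:ℝ) ^ (-α)) * r ^ m := by
    intro x hx m
    have hy : x / 3 ^ (m+1) ≠ 0 := div_ne_zero hx (by positivity)
    have h3y : 3 * (x / 3 ^ (m+1)) = x / 3 ^ m := by
      field_simp; ring
    have hb := hf _ hy
    rw [h3y] at hb
    have hpow : (0:ℝ) < 3 ^ (l*m) := by positivity
    have heq : S x m - S x (m+1) = (f (x/3^m) - f (x/3^(m+1)) / 3^l) / 3^(l*m) := by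
      simp only [hS]
      rw [mul_add, pow_add, mul_one]
      field_simp
      ring
    rw [Real.dist_eq, heq, abs_div, abs_of_pos hpow, div_le_iff₀ hpow]
    calc |f (x/3^m) - f (x/3^(m+1)) / 3^l| ≤ 2 * ε * |x / 3^(m+1)| ^ α := hb
      _ = 2 * ε * |x| ^ α * (3:ℝ) ^ (-α) * r ^ m * 3 ^ (l*m) := by
          rw [abs_div, abs_of_pos (by positivity : (0:ℝ) < 3 ^ (m+1)),
            Real.div_rpow (abs_nonneg x) (by positivity)]
          rw [← Real.rpow_natCast (3:ℝ) (m+1), ← Real.rpow_natCast r m, hr_def,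
            ← Real.rpow_mul h3.le, ← Real.rpow_mul h3.le, ← Real.rpow_natCast (3:ℝ) (l*m)]
          rw [div_eq_mul_inv, ← Real.rpow_neg h3.le, ← mul_assoc,
            mul_assoc (2*ε*|x| ^ α) ((3:ℝ)^(-α)), ← Real.rpow_add h3,
            mul_assoc (2*ε*|x| ^ α), ← Real.rpow_add h3]
          congr 1
          push_cast
          ring
  have hconv : ∀ x : ℝ, x ≠ 0 → ∃ a, Tendsto (S x) atTop (𝓝 a) := by
    intro x hx
    exact cauchySeq_tendsto_of_complete
      (cauchySeq_of_le_geometric r _ hr1 (hstep x hx))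
  choose g' hg' using hconv
  classical
  refine ⟨fun x => if hx : x = 0 then 0 else g' x hx, ?_, ?_⟩
  · intro x hx
    have h3x : (3:ℝ) * x ≠ 0 := by simp [hx]
    simp only [h3x, hx, dif_neg, not_false_iff]
    have hshift : ∀ m : ℕ, S (3*x) (m+1) = S x m / 3 ^ l := by
      intro m
      simp only [hS]
      have : 3 * x / 3 ^ (m+1) = x / 3 ^ m := by field_simp; ring
      rw [this, mul_add, pow_add, mul_one, div_div]
    have h1 : Tendsto (fun m => S (3*x) (m+1)) atTop (𝓝 (g' x hx / 3 ^ l)) := by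
      simp only [hshift]
      exact (hg' x hx).div_const _
    have h2 : Tendsto (S (3*x)) atTop (𝓝 (g' x hx / 3 ^ l)) :=
      (tendsto_add_atTop_iff_nat 1).mp h1
    exact tendsto_nhds_unique (hg' (3*x) h3x) h2
  · intro x hx
    simp only [hx, dif_neg, not_false_iff]
    have hS0 : S x 0 = f x := by simp [hS]
    have hd := dist_le_of_le_geometric_of_tendsto₀ r _ hr1 (hstep x hx) (hg' x hx)
    rw [hS0, Real.dist_eq] at hd
    refine hd.trans (le_of_eq ?_)
    have hrne : (3:ℝ) ^ (α + (l:ℝ)) - 1 > 0 := by linarith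
    have hkey : 1 - r = ((3:ℝ) ^ (α + (l:ℝ)) - 1) / (3:ℝ) ^ (α + (l:ℝ)) := by
      rw [hr_def, Real.rpow_neg (le_of_lt h3)]
      field_simp
    rw [hkey]
    have hRpos : (0:ℝ) < (3:ℝ) ^ (α + (l:ℝ)) := Real.rpow_pos_of_pos h3 _
    rw [div_div_eq_mul_div]
    have h3l : (3:ℝ) ^ (-α) * (3:ℝ) ^ (α + (l:ℝ)) = (3:ℝ) ^ l := by
      rw [← Real.rpow_add h3, ← Real.rpow_natCast (3:ℝ) l]
      ring_nf
    rw [mul_assoc (2*ε*|x| ^ α), h3l]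
    ring
end

section
/- Let l ≥ 1 be an integer, ε > 0, and real numbers p, q with p + q + l > 0. Suppose f : ℝ* → ℝ satisfies |f(3x) - f(x)/3^l| ≤ ε |x|^(p+q) for all nonzero x. Then there exists g : ℝ* → ℝ satisfying g(3x) = g(x)/3^l for all nonzero x and |f(x) - g(x)| ≤ (3^l ε / (3^(p+q+l) - 1)) |x|^(p+q) for all nonzero x. -/
open Filter Topology

theorem stability_mixed_power_bound (l : ℕ) (hl : 1 ≤ l) (ε : ℝ) (hε : 0 < ε)
    (p q : ℝ) (hpq : p + q + l > 0)
    (f : ℝ → ℝ)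
    (hf : ∀ x : ℝ, x ≠ 0 → |f (3 * x) - f x / 3 ^ l| ≤ ε * |x| ^ (p + q)) :
    ∃ g : ℝ → ℝ,
      (∀ x : ℝ, x ≠ 0 → g (3 * x) = g x / 3 ^ l) ∧
      (∀ x : ℝ, x ≠ 0 →
        |f x - g x| ≤ ((3 : ℝ) ^ l * ε / ((3 : ℝ) ^ (p + q + (l : ℝ)) - 1)) * |x| ^ (p + q)) := by
  set A : ℝ := p + q with hA
  set c : ℝ := ((3:ℝ) ^ l)⁻¹ with hc
  set u : ℝ → ℕ → ℝ := fun x n => c ^ n * f (x / 3 ^ n) with hu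
  set r : ℝ := (3:ℝ) ^ (-(A + (l:ℝ))) with hr
  have h3 : (0:ℝ) < 3 := by norm_num
  have hr1 : r < 1 :=
    Real.rpow_lt_one_of_one_lt_of_neg (by norm_num) (by linarith)
  have hcpow : ∀ n : ℕ, c ^ n = (3:ℝ) ^ (-((l:ℝ) * n)) := by
    intro n
    rw [hc, ← Real.rpow_natCast (3:ℝ) l, ← Real.rpow_neg (le_of_lt h3),
      ← Real.rpow_natCast ((3:ℝ) ^ (-(l:ℝ))) n, ← Real.rpow_mul (le_of_lt h3)]
    ring_nf
  have hrpow : ∀ n : ℕ, r ^ n = (3:ℝ) ^ (-(A + (l:ℝ)) * n) := by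
    intro n
    rw [hr, ← Real.rpow_natCast ((3:ℝ) ^ (-(A + (l:ℝ)))) n, ← Real.rpow_mul (le_of_lt h3)]
  -- key geometric bound
  have key : ∀ x : ℝ, x ≠ 0 → ∀ n : ℕ,
      dist (u x n) (u x (n+1)) ≤ (ε * |x| ^ A * (3:ℝ) ^ (-A)) * r ^ n := by
    intro x hx n
    have h3n : ((3:ℝ) ^ (n+1)) ≠ 0 := by positivity
    have hy : x / 3 ^ (n+1) ≠ 0 := div_ne_zero hx h3n
    have hxy : x / 3 ^ n = 3 * (x / 3 ^ (n+1)) := by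
      field_simp
      ring
    have hb := hf (x / 3 ^ (n+1)) hy
    have hcpos : (0:ℝ) < c := by positivity
    have e1 : dist (u x n) (u x (n+1)) = c ^ n * |f (3 * (x / 3 ^ (n+1))) - f (x / 3 ^ (n+1)) / 3 ^ l| := by
      have e0 : c ^ (n+1) * f (x / 3 ^ (n+1)) = c ^ n * (f (x / 3 ^ (n+1)) / 3 ^ l) := by
        rw [pow_succ, hc]; field_simp
      rw [Real.dist_eq, hu]
      simp only
      rw [hxy, e0, ← mul_sub, abs_mul, abs_of_pos (pow_pos hcpos n)]
    rw [e1]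
    have hle : c ^ n * |f (3 * (x / 3 ^ (n+1))) - f (x / 3 ^ (n+1)) / 3 ^ l|
        ≤ c ^ n * (ε * |x / 3 ^ (n+1)| ^ A) :=
      mul_le_mul_of_nonneg_left hb (le_of_lt (pow_pos hcpos n))
    refine hle.trans (le_of_eq ?_)
    have habs : |x / 3 ^ (n+1)| = |x| / 3 ^ (n+1) := by
      rw [abs_div, abs_of_pos (by positivity : (0:ℝ) < (3:ℝ) ^ (n+1))]
    rw [habs, Real.div_rpow (abs_nonneg x) (by positivity),
      ← Real.rpow_natCast (3:ℝ) (n+1), ← Real.rpow_mul (le_of_lt h3),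
      div_eq_mul_inv, ← Real.rpow_neg (le_of_lt h3), hcpow, hrpow]
    have comb : (3:ℝ) ^ (-((l:ℝ) * n)) * (3:ℝ) ^ (-((((n:ℕ)+1 : ℕ):ℝ) * A))
        = (3:ℝ) ^ (-A) * (3:ℝ) ^ (-(A + (l:ℝ)) * n) := by
      rw [← Real.rpow_add h3, ← Real.rpow_add h3]
      congr 1
      push_cast
      ring
    linear_combination (ε * |x| ^ A) * comb
  have hC0 : ∀ x : ℝ, 0 ≤ ε * |x| ^ A * (3:ℝ) ^ (-A) := by intro x; positivity
  -- convergence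
  have hconv : ∀ x : ℝ, x ≠ 0 → ∃ a : ℝ, Tendsto (u x) atTop (𝓝 a) :=
    fun x hx => cauchySeq_tendsto_of_complete (cauchySeq_of_le_geometric r _ hr1 (key x hx))
  set g : ℝ → ℝ := fun x => limUnder atTop (u x) with hg
  have htend : ∀ x : ℝ, x ≠ 0 → Tendsto (u x) atTop (𝓝 (g x)) := by
    intro x hx
    obtain ⟨a, ha⟩ := hconv x hx
    rw [show g x = a from ha.limUnder_eq]
    exact ha
  refine ⟨g, ?_, ?_⟩
  · -- functional equation
    intro x hx
    have h3x : (3:ℝ) * x ≠ 0 := by simp [hx]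
    have h1 : Tendsto (fun n => u (3 * x) (n + 1)) atTop (𝓝 (g (3 * x))) :=
      (htend _ h3x).comp (tendsto_add_atTop_nat 1)
    have h2 : (fun n => u (3 * x) (n + 1)) = fun n => c * u x n := by
      funext n
      rw [hu]
      simp only
      rw [pow_succ]
      have : 3 * x / 3 ^ (n + 1) = x / 3 ^ n := by
        field_simp
        ring
      rw [this]
      ring
    have h3' : Tendsto (fun n => c * u x n) atTop (𝓝 (c * g x)) :=
      (htend x hx).const_mul c
    rw [h2] at h1
    have := tendsto_nhds_unique h1 h3'
    rw [this, hc]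
    field_simp
  · -- bound
    intro x hx
    have hb := dist_le_of_le_geometric_of_tendsto₀ r _ hr1 (key x hx) (htend x hx)
    have h0 : u x 0 = f x := by simp [hu]
    rw [h0, Real.dist_eq] at hb
    refine hb.trans (le_of_eq ?_)
    have hD : (1:ℝ) < (3:ℝ) ^ (A + (l:ℝ)) :=
      Real.one_lt_rpow_iff_of_pos h3 |>.mpr (Or.inl ⟨by norm_num, by linarith⟩)
    have hDne : (3:ℝ) ^ (A + (l:ℝ)) ≠ 0 := by positivity
    have hD1 : (3:ℝ) ^ (A + (l:ℝ)) - 1 ≠ 0 := by linarith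
    have e1 : r = ((3:ℝ) ^ (A + (l:ℝ)))⁻¹ := by
      rw [hr, Real.rpow_neg (le_of_lt h3)]
    have e2 : (3:ℝ) ^ (-A) = (3:ℝ) ^ (l:ℝ) / (3:ℝ) ^ (A + (l:ℝ)) := by
      rw [← Real.rpow_sub h3]
      ring_nf
    have e3 : ((3:ℝ) ^ l : ℝ) = (3:ℝ) ^ (l:ℝ) := (Real.rpow_natCast 3 l).symm
    rw [e1, e2, e3]
    rw [show p + q + (l:ℝ) = A + (l:ℝ) from rfl]
    field_simp
end

section
/- Let l ≥ 1 be an integer and suppose g, g' : ℝ* → ℝ both satisfy g(x/3) = 3^l g(x) and g'(x/3) = 3^l g'(x) for all nonzero x, and both satisfy |f(x) - g(x)| ≤ B(x) and |f(x) - g'(x)| ≤ B(x) for some f : ℝ* → ℝ, where B(x) = ∑_{s=0}^∞ 3^(-l s) Q(x/3^(s+1), x/3^(s+1)) for a nonnegative Q whose associated series converges and satisfies 3^(-l m) B(x/3^m) → 0 as m → ∞ for each nonzero x. Then g = g'. -/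
open Filter Topology

theorem stability_uniqueness (l : ℕ) (hl : 1 ≤ l)
    (Q : ℝ → ℝ → ℝ) (hQ : ∀ x y : ℝ, 0 ≤ Q x y)
    (hsum : ∀ x : ℝ, x ≠ 0 →
      Summable (fun s : ℕ => (1 / 3 ^ (l * s)) * Q (x / 3 ^ (s + 1)) (x / 3 ^ (s + 1))))
    (B : ℝ → ℝ)
    (hB : ∀ x : ℝ, B x = ∑' s : ℕ, (1 / 3 ^ (l * s)) * Q (x / 3 ^ (s + 1)) (x / 3 ^ (s + 1)))
    (hBtend : ∀ x : ℝ, x ≠ 0 →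
      Tendsto (fun m : ℕ => (1 / 3 ^ (l * m)) * B (x / 3 ^ m)) atTop (𝓝 0))
    (f g g' : ℝ → ℝ)
    (hg : ∀ x : ℝ, x ≠ 0 → g (x / 3) = 3 ^ l * g x)
    (hg' : ∀ x : ℝ, x ≠ 0 → g' (x / 3) = 3 ^ l * g' x)
    (hfg : ∀ x : ℝ, x ≠ 0 → |f x - g x| ≤ B x)
    (hfg' : ∀ x : ℝ, x ≠ 0 → |f x - g' x| ≤ B x) :
    ∀ x : ℝ, x ≠ 0 → g x = g' x := by
  intro x hx
  have hxm : ∀ m : ℕ, x / 3 ^ m ≠ 0 := fun m => by positivity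
  have hiter : ∀ (h : ℝ → ℝ), (∀ y : ℝ, y ≠ 0 → h (y / 3) = 3 ^ l * h y) →
      ∀ m : ℕ, h (x / 3 ^ m) = 3 ^ (l * m) * h x := by
    intro h hh m
    induction m with
    | zero => simp
    | succ n ih =>
      have : x / 3 ^ (n + 1) = (x / 3 ^ n) / 3 := by ring
      rw [this, hh _ (hxm n), ih, mul_add, pow_add]
      ring
  have key : ∀ m : ℕ, |g x - g' x| ≤ 2 * ((1 / 3 ^ (l * m)) * B (x / 3 ^ m)) := by
    intro m
    have h1 := hfg _ (hxm m)
    have h2 := hfg' _ (hxm m)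
    rw [hiter g hg m] at h1
    rw [hiter g' hg' m] at h2
    have hpos : (0 : ℝ) < 3 ^ (l * m) := by positivity
    have : |3 ^ (l * m) * g x - 3 ^ (l * m) * g' x| ≤ 2 * B (x / 3 ^ m) := by
      calc |3 ^ (l * m) * g x - 3 ^ (l * m) * g' x|
          = |(f (x / 3 ^ m) - 3 ^ (l * m) * g' x) - (f (x / 3 ^ m) - 3 ^ (l * m) * g x)| := by
            ring_nf
        _ ≤ |f (x / 3 ^ m) - 3 ^ (l * m) * g' x| + |f (x / 3 ^ m) - 3 ^ (l * m) * g x| :=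
            abs_sub _ _
        _ ≤ 2 * B (x / 3 ^ m) := by linarith
    have habs : |3 ^ (l * m) * g x - 3 ^ (l * m) * g' x|
        = 3 ^ (l * m) * |g x - g' x| := by
      rw [← mul_sub, abs_mul, abs_of_pos hpos]
    rw [habs] at this
    have := (le_div_iff₀' hpos).mpr this
    calc |g x - g' x| ≤ 2 * B (x / 3 ^ m) / 3 ^ (l * m) := this
      _ = 2 * ((1 / 3 ^ (l * m)) * B (x / 3 ^ m)) := by ring
  have htend : Tendsto (fun m : ℕ => 2 * ((1 / 3 ^ (l * m)) * B (x / 3 ^ m))) atTop (𝓝 0) := by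
    simpa using (hBtend x hx).const_mul 2
  have : |g x - g' x| ≤ 0 := le_of_tendsto_of_tendsto tendsto_const_nhds htend
    (Eventually.of_forall key)
  have := abs_nonpos_iff.mp this
  linarith [abs_nonneg (g x - g' x), this, sub_eq_zero.mp this]
end
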